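/- arXiv:1206.6918 — 2 statements merged into one kernel-verified Lean document; each statement's English description precedes it below -/
import Mathlib

section
/- Closed form for the expected logarithm of a sum of two independent exponentially weighted terms: for all reals a, b > 0 with a ≠ b, ∫₀^∞ ∫₀^∞ ln(1 + a·s + b·t)·e^{-s}·e^{-t} ds dt = (a·e^{1/a}·E1(1/a) − b·e^{1/b}·E1(1/b)) / (a − b). Equivalently, if X and Y are independent exponential random variables with mean 1, then E[ln(1 + a·X + b·Y)] = (a·e^{1/a}·E1(1/a) − b·e^{1/b}·E1(1/b))/(a − b). -/
open MeasureTheory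

noncomputable section

/-- The exponential integral `E1(x) = ∫_x^∞ e^{-q}/q dq`. -/
def expInt (x : ℝ) : ℝ := ∫ q in Set.Ioi x, Real.exp (-q) / q

/-!
With `g(m) = e^m E1(m) = ∫₀^∞ e^{-t}/(m + t) dt` (`scaledExpInt`), both integrals yield to integration by parts
against `e^{-t}`. The inner one gives `log(1 + a s) + g((1 + a s)/b)`. Since `g' = g - 1/m`,
integrating `g((1 + a s)/b) e^{-s}` by parts returns the same integral times `a/b`, plus
boundary and elementary terms; for `a ≠ b` this determines it.
-/

open Real Set Filter Topology

lemma integrableOn_exp_neg_div_self {x : ℝ} (hx : 0 < x) :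
    IntegrableOn (fun q => exp (-q) / q) (Ioi x) := by
  refine ((integrableOn_exp_neg_Ioi x).const_mul x⁻¹).mono' ?_ ?_
  · exact ((continuous_exp.comp continuous_neg).continuousOn.div continuousOn_id
      fun q hq => (hx.trans hq).ne').aestronglyMeasurable measurableSet_Ioi
  · filter_upwards [ae_restrict_mem measurableSet_Ioi] with q hq
    have hq0 : 0 < q := hx.trans hq
    rw [norm_of_nonneg (by positivity), div_eq_inv_mul]
    gcongr
    exact hq.le

lemma expInt_nonneg {x : ℝ} (hx : 0 < x) : 0 ≤ expInt x :=
  setIntegral_nonneg measurableSet_Ioi fun q hq => by have := hx.trans hq; positivity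

lemma expInt_le_exp_neg_div {x : ℝ} (hx : 0 < x) : expInt x ≤ exp (-x) / x := by
  calc expInt x ≤ ∫ q in Ioi x, exp (-q) / x := by
        refine setIntegral_mono_on (integrableOn_exp_neg_div_self hx)
          ((integrableOn_exp_neg_Ioi x).div_const x) measurableSet_Ioi fun q hq => ?_
        exact div_le_div_of_nonneg_left (exp_pos _).le hx (le_of_lt hq)
    _ = exp (-x) / x := by rw [integral_div, integral_exp_neg_Ioi]

lemma tendsto_expInt_atTop : Tendsto expInt atTop (𝓝 0) := by
  refine tendsto_of_tendsto_of_tendsto_of_le_of_le' tendsto_const_nhds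
    tendsto_exp_neg_atTop_nhds_zero ?_ ?_
  · filter_upwards [eventually_gt_atTop 0] with x hx using expInt_nonneg hx
  · filter_upwards [eventually_ge_atTop 1] with x hx
    calc expInt x ≤ exp (-x) / x := expInt_le_exp_neg_div (by linarith)
      _ ≤ exp (-x) := div_le_self (exp_pos _).le hx

lemma hasDerivAt_expInt {x : ℝ} (hx : 0 < x) : HasDerivAt expInt (-(exp (-x) / x)) x := by
  have hcont : ContinuousOn (fun q => exp (-q) / q) (Ioi 0) :=
    (continuous_exp.comp continuous_neg).continuousOn.div continuousOn_id fun q hq => hq.ne'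
  have hFTC : HasDerivAt (fun y => expInt x - ∫ q in x..y, exp (-q) / q) (-(exp (-x) / x)) x :=
    (intervalIntegral.integral_hasDerivAt_right IntervalIntegrable.refl
      (hcont.stronglyMeasurableAtFilter isOpen_Ioi x hx) (hcont.continuousAt (Ioi_mem_nhds hx))
      ).const_sub _
  refine hFTC.congr_of_eventuallyEq ?_
  filter_upwards [Ioi_mem_nhds hx] with y hy
  rw [← intervalIntegral.integral_Ioi_sub_Ioi' (integrableOn_exp_neg_div_self hx)
    (integrableOn_exp_neg_div_self hy), expInt, expInt, sub_sub_cancel]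

def scaledExpInt (m : ℝ) : ℝ := exp m * expInt m

lemma scaledExpInt_nonneg {m : ℝ} (hm : 0 < m) : 0 ≤ scaledExpInt m :=
  mul_nonneg (exp_pos m).le (expInt_nonneg hm)

lemma scaledExpInt_le_inv {m : ℝ} (hm : 0 < m) : scaledExpInt m ≤ m⁻¹ := by
  calc scaledExpInt m ≤ exp m * (exp (-m) / m) :=
        mul_le_mul_of_nonneg_left (expInt_le_exp_neg_div hm) (exp_pos m).le
    _ = m⁻¹ := by rw [mul_div_assoc', ← exp_add, add_neg_cancel, exp_zero, one_div]

lemma hasDerivAt_scaledExpInt {m : ℝ} (hm : 0 < m) :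
    HasDerivAt scaledExpInt (scaledExpInt m - m⁻¹) m := by
  refine ((hasDerivAt_exp m).mul (hasDerivAt_expInt hm)).congr_deriv ?_
  rw [scaledExpInt, mul_neg, mul_div_assoc', ← exp_add, add_neg_cancel, exp_zero, one_div,
    sub_eq_add_neg]

lemma continuousOn_scaledExpInt : ContinuousOn scaledExpInt (Ioi 0) :=
  fun _ hm => (hasDerivAt_scaledExpInt hm).continuousAt.continuousWithinAt

lemma integral_Ioi_mul_exp_neg_of_hasDerivAt {f f' : ℝ → ℝ}
    (hf : ∀ t ∈ Ici (0 : ℝ), HasDerivAt f (f' t) t)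
    (hfi : IntegrableOn (fun t => f t * exp (-t)) (Ioi 0))
    (hf'i : IntegrableOn (fun t => f' t * exp (-t)) (Ioi 0)) :
    ∫ t in Ioi (0 : ℝ), f t * exp (-t) = f 0 + ∫ t in Ioi (0 : ℝ), f' t * exp (-t) := by
  have hderiv : ∀ t ∈ Ici (0 : ℝ), HasDerivAt (fun t => f t * exp (-t))
      (f' t * exp (-t) - f t * exp (-t)) t := fun t ht =>
    ((hf t ht).mul (hasDerivAt_neg t).exp).congr_deriv (by ring)
  have hderiv_int := hf'i.sub hfi
  have hlim := tendsto_zero_of_hasDerivAt_of_integrableOn_Ioi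
    (fun t ht => hderiv t (mem_Ici_of_Ioi ht)) hderiv_int hfi
  have hFTC := integral_Ioi_of_hasDerivAt_of_tendsto' hderiv hderiv_int hlim
  rw [integral_sub hf'i hfi, neg_zero, exp_zero, mul_one] at hFTC
  linarith

lemma integrableOn_mul_exp_neg_of_abs_le {f : ℝ → ℝ} {C D : ℝ} (hf : ContinuousOn f (Ioi 0))
    (hbound : ∀ t ∈ Ioi (0 : ℝ), |f t| ≤ C + D * t) :
    IntegrableOn (fun t => f t * exp (-t)) (Ioi 0) := by
  have hdom : IntegrableOn (fun t : ℝ => C * exp (-t) + D * (t * exp (-t))) (Ioi 0) := by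
    have hlin : IntegrableOn (fun t : ℝ => t * exp (-t)) (Ioi 0) := by
      simpa using integrableOn_rpow_mul_exp_neg_rpow (s := 1) (p := 1) (by norm_num) one_pos
    exact ((integrableOn_exp_neg_Ioi 0).const_mul C).add (hlin.const_mul D)
  refine hdom.mono' ((hf.mul (continuous_exp.comp continuous_neg).continuousOn
    ).aestronglyMeasurable measurableSet_Ioi) ?_
  filter_upwards [ae_restrict_mem measurableSet_Ioi] with t ht
  rw [norm_mul, norm_of_nonneg (exp_pos _).le, Real.norm_eq_abs]
  nlinarith [hbound t ht, exp_pos (-t)]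

section AffineArgument

variable {K c : ℝ}

lemma integrableOn_inv_add_mul_mul_exp_neg (hK : 0 < K) (hc : 0 ≤ c) :
    IntegrableOn (fun t => (K + c * t)⁻¹ * exp (-t)) (Ioi 0) := by
  refine integrableOn_mul_exp_neg_of_abs_le (C := K⁻¹) (D := 0) ?_ fun t ht => ?_
  · exact (continuousOn_const.add (continuousOn_const.mul continuousOn_id)).inv₀
      fun t ht => (add_pos_of_pos_of_nonneg hK (mul_nonneg hc (le_of_lt ht))).ne'
  · have ht : 0 < t := ht
    rw [zero_mul, add_zero, abs_of_pos (by positivity)]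
    exact inv_anti₀ hK (le_add_of_nonneg_right (mul_nonneg hc ht.le))

lemma integral_inv_add_mul_mul_exp_neg (hK : 0 < K) (hc : 0 < c) :
    ∫ t in Ioi (0 : ℝ), (K + c * t)⁻¹ * exp (-t) = scaledExpInt (K / c) / c := by
  set F : ℝ → ℝ := fun t => -(exp (K / c) * expInt (K / c + t)) / c
  have hderiv : ∀ t ∈ Ici (0 : ℝ), HasDerivAt F ((K + c * t)⁻¹ * exp (-t)) t := by
    intro t ht
    have ht : 0 ≤ t := ht
    have hpos : 0 < K / c + t := by positivity
    refine ((((hasDerivAt_expInt hpos).comp_const_add (K / c) t).const_mul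
      (exp (K / c))).neg.div_const c).congr_deriv ?_
    have hexp : exp (K / c) * exp (-(K / c + t)) = exp (-t) := by rw [← exp_add]; ring_nf
    rw [mul_neg, neg_neg, ← mul_div_assoc, hexp]
    field_simp
  have hlim : Tendsto F atTop (𝓝 0) := by
    simpa [F] using ((tendsto_expInt_atTop.comp (tendsto_atTop_add_const_left _ (K / c)
      tendsto_id)).const_mul (exp (K / c))).neg.div_const c
  rw [integral_Ioi_of_hasDerivAt_of_nonneg' hderiv (fun t ht => by have := ht.out; positivity)
    hlim]
  simp [F, scaledExpInt, neg_div]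

lemma integrableOn_log_add_mul_mul_exp_neg (hK : 0 < K) (hc : 0 ≤ c) :
    IntegrableOn (fun t => log (K + c * t) * exp (-t)) (Ioi 0) := by
  refine integrableOn_mul_exp_neg_of_abs_le (C := |log K| + K) (D := c) ?_ fun t ht => ?_
  · exact (continuousOn_const.add (continuousOn_const.mul continuousOn_id)).log
      fun t ht => (add_pos_of_pos_of_nonneg hK (mul_nonneg hc (le_of_lt ht))).ne'
  · have hKt : K ≤ K + c * t := le_add_of_nonneg_right (mul_nonneg hc (le_of_lt ht))
    have hlower : log K ≤ log (K + c * t) := log_le_log hK hKt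
    have hupper : log (K + c * t) ≤ K + c * t - 1 := log_le_sub_one_of_pos (hK.trans_le hKt)
    rw [abs_le]
    constructor <;> linarith [neg_abs_le (log K), abs_nonneg (log K)]

lemma integral_log_add_mul_mul_exp_neg (hK : 0 < K) (hc : 0 < c) :
    ∫ t in Ioi (0 : ℝ), log (K + c * t) * exp (-t) = log K + scaledExpInt (K / c) := by
  have hderiv : ∀ t ∈ Ici (0 : ℝ),
      HasDerivAt (fun t => log (K + c * t)) (c * (K + c * t)⁻¹) t := by
    intro t ht
    have ht : 0 ≤ t := ht
    refine ((((hasDerivAt_id t).const_mul c).const_add K).log (by positivity)).congr_deriv ?_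
    simp [div_eq_mul_inv]
  have hinv := integrableOn_inv_add_mul_mul_exp_neg hK hc.le
  have hinv' : IntegrableOn (fun t => c * (K + c * t)⁻¹ * exp (-t)) (Ioi 0) := by
    simp_rw [mul_assoc]
    exact hinv.const_mul c
  rw [integral_Ioi_mul_exp_neg_of_hasDerivAt hderiv
    (integrableOn_log_add_mul_mul_exp_neg hK hc.le) hinv']
  simp only [mul_zero, add_zero, mul_assoc]
  rw [integral_const_mul, integral_inv_add_mul_mul_exp_neg hK hc, mul_div_cancel₀ _ hc.ne']

lemma integrableOn_scaledExpInt_add_mul_mul_exp_neg (hK : 0 < K) (hc : 0 ≤ c) :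
    IntegrableOn (fun t => scaledExpInt (K + c * t) * exp (-t)) (Ioi 0) := by
  have hpos : ∀ t ∈ Ioi (0 : ℝ), 0 < K + c * t := fun t ht =>
    add_pos_of_pos_of_nonneg hK (mul_nonneg hc (le_of_lt ht))
  refine integrableOn_mul_exp_neg_of_abs_le (C := K⁻¹) (D := 0) ?_ fun t ht => ?_
  · exact continuousOn_scaledExpInt.comp
      (continuousOn_const.add (continuousOn_const.mul continuousOn_id)) hpos
  · rw [zero_mul, add_zero, abs_of_nonneg (scaledExpInt_nonneg (hpos t ht))]
    calc scaledExpInt (K + c * t) ≤ (K + c * t)⁻¹ := scaledExpInt_le_inv (hpos t ht)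
      _ ≤ K⁻¹ := inv_anti₀ hK (le_add_of_nonneg_right (mul_nonneg hc (le_of_lt ht)))

lemma sub_mul_integral_scaledExpInt_add_mul_mul_exp_neg (hK : 0 < K) (hc : 0 < c) :
    (1 - c) * ∫ t in Ioi (0 : ℝ), scaledExpInt (K + c * t) * exp (-t)
      = scaledExpInt K - scaledExpInt (K / c) := by
  have hderiv : ∀ t ∈ Ici (0 : ℝ), HasDerivAt (fun t => scaledExpInt (K + c * t))
      (c * scaledExpInt (K + c * t) - c * (K + c * t)⁻¹) t := by
    intro t ht
    have ht : 0 ≤ t := ht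
    refine ((hasDerivAt_scaledExpInt (by positivity)).comp t
      (((hasDerivAt_id t).const_mul c).const_add K)).congr_deriv ?_
    simp only [id, mul_one]
    ring
  have hfi := integrableOn_scaledExpInt_add_mul_mul_exp_neg hK hc.le
  have hinv := integrableOn_inv_add_mul_mul_exp_neg hK hc.le
  have hf'i : IntegrableOn
      (fun t => (c * scaledExpInt (K + c * t) - c * (K + c * t)⁻¹) * exp (-t)) (Ioi 0) := by
    simp_rw [sub_mul, mul_assoc]
    exact (hfi.const_mul c).sub (hinv.const_mul c)
  have hibp := integral_Ioi_mul_exp_neg_of_hasDerivAt hderiv hfi hf'i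
  simp_rw [sub_mul, mul_assoc] at hibp
  rw [integral_sub (hfi.const_mul c) (hinv.const_mul c), integral_const_mul, integral_const_mul,
    integral_inv_add_mul_mul_exp_neg hK hc, mul_div_cancel₀ _ hc.ne', mul_zero, add_zero] at hibp
  linarith

end AffineArgument

/-- Closed form for the expected logarithm of a sum of two independent
exponentially weighted terms: for `a, b > 0` with `a ≠ b`,
`∫₀^∞∫₀^∞ ln(1+a·s+b·t)·e^{-s}·e^{-t} ds dt
  = (a·e^{1/a}·E1(1/a) − b·e^{1/b}·E1(1/b))/(a−b)`. -/
theorem integral_integral_log_one_add_two_exponentials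
    (a b : ℝ) (ha : 0 < a) (hb : 0 < b) (hab : a ≠ b) :
    (∫ s in Set.Ioi (0 : ℝ), ∫ t in Set.Ioi (0 : ℝ),
        Real.log (1 + a * s + b * t) * Real.exp (-s) * Real.exp (-t))
      = (a * Real.exp (1 / a) * expInt (1 / a) - b * Real.exp (1 / b) * expInt (1 / b))
          / (a - b) := by
  have hinner : ∀ s ∈ Ioi (0 : ℝ),
      ∫ t in Ioi (0 : ℝ), log (1 + a * s + b * t) * exp (-s) * exp (-t)
        = log (1 + a * s) * exp (-s) + scaledExpInt (1 / b + a / b * s) * exp (-s) := by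
    intro s hs
    have hs : 0 < s := hs
    simp_rw [mul_right_comm _ (exp (-s))]
    rw [integral_mul_const, integral_log_add_mul_mul_exp_neg (by positivity) hb, add_mul]
    congr 3
    field_simp
  have hfirst := integral_log_add_mul_mul_exp_neg one_pos ha
  have hsecond :=
    sub_mul_integral_scaledExpInt_add_mul_mul_exp_neg (one_div_pos.2 hb) (div_pos ha hb)
  rw [log_one, zero_add] at hfirst
  rw [div_div_div_cancel_right₀ hb.ne'] at hsecond
  rw [setIntegral_congr_fun measurableSet_Ioi hinner, integral_add
    (integrableOn_log_add_mul_mul_exp_neg one_pos ha.le)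
    (integrableOn_scaledExpInt_add_mul_mul_exp_neg (one_div_pos.2 hb) (div_pos ha hb).le)]
  rw [hfirst, mul_assoc a, mul_assoc b, ← scaledExpInt, ← scaledExpInt,
    eq_div_iff (sub_ne_zero.2 hab)]
  set I := ∫ t in Ioi (0 : ℝ), scaledExpInt (1 / b + a / b * t) * exp (-t)
  field_simp at hsecond
  linear_combination -hsecond
end
end

section
/- Converse chain inequality for the individual destination bound: for any (m,n) source-channel code for the DM MARC, with all random variables (S1^m, S2^m, W^m, W3^m, X1^n, X2^n, X3^n, Y^n, Y3^n) distributed according to the joint law induced by the source, the encoders, the causal relay function and the memoryless channel, the following holds: ∑_{i=1}^{n} I(X_{1,i}, X_{3,i}; Y_i | X_{2,i}) ≥ I(S1^m, W3^m; Y^n | S2^m, W^m) ≥ H(S1^m | S2^m, W^m) − H(S1^m | Y^n, S2^m, W^m). -/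
/-!
Write `A = (S₁ᵐ, W₃ᵐ)` and `Z = (S₂ᵐ, Wᵐ)`. By the chain rule, `I(A; Yⁿ | Z)` is the sum over `i`
of `I(A; Y_i | Y^{i-1}, Z) = H(Y_i | Y^{i-1}, Z) - H(Y_i | A, Y^{i-1}, Z)`. Conditioning only on
`X_{2,i}`, a function of `Z`, can only increase the first entropy; conditioning in addition on the
relay outputs `Y₃^{i-1}` can only decrease the second. Given the sources and all past outputs, the
law of `Y_i` only depends on the current inputs `(X_{1,i}, X_{2,i}, X_{3,i})`: the channel part of
the joint law is a product of causal kernels, so the future outputs sum out. Hence the latter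
entropy is `H(Y_i | X_{1,i}, X_{3,i}, X_{2,i})`.
The second inequality is `I(S₁, W₃; Yⁿ | Z) ≥ I(S₁; Yⁿ | Z)`.
-/

open scoped BigOperators
open Finset

noncomputable section
open scoped Classical

namespace Paper

def pr {Ω A : Type*} [Fintype Ω] (μ : Ω → ℝ) (X : Ω → A) (a : A) : ℝ :=
  ∑ ω, if X ω = a then μ ω else 0

def Hent {Ω A : Type*} [Fintype Ω] [Fintype A] (μ : Ω → ℝ) (X : Ω → A) : ℝ :=
  - ∑ a, pr μ X a * Real.logb 2 (pr μ X a)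

def condEnt {Ω A B : Type*} [Fintype Ω] [Fintype A] [Fintype B]
    (μ : Ω → ℝ) (X : Ω → A) (Y : Ω → B) : ℝ :=
  Hent μ (fun ω => (X ω, Y ω)) - Hent μ Y

def mutInfo {Ω A B : Type*} [Fintype Ω] [Fintype A] [Fintype B]
    (μ : Ω → ℝ) (X : Ω → A) (Y : Ω → B) : ℝ :=
  Hent μ X + Hent μ Y - Hent μ (fun ω => (X ω, Y ω))

def condMutInfo {Ω A B C : Type*} [Fintype Ω] [Fintype A] [Fintype B] [Fintype C]
    (μ : Ω → ℝ) (X : Ω → A) (Y : Ω → B) (Z : Ω → C) : ℝ :=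
  condEnt μ X Z - condEnt μ X (fun ω => (Y ω, Z ω))

structure SourcePMF (S : Type) [Fintype S] where
  q : S → ℝ
  nonneg : ∀ s, 0 ≤ q s
  sum_one : ∑ s, q s = 1

/-- A discrete memoryless multiple-access relay channel. -/
structure DMMARC (X1 X2 X3 Y Y3 : Type) [Fintype X1] [Fintype X2] [Fintype X3]
    [Fintype Y] [Fintype Y3] where
  P : X1 → X2 → X3 → Y → Y3 → ℝ
  nonneg : ∀ x1 x2 x3 y y3, 0 ≤ P x1 x2 x3 y y3
  sum_one : ∀ x1 x2 x3, ∑ y : Y, ∑ y3 : Y3, P x1 x2 x3 y y3 = 1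

/-- An (m,n) source-channel code for the MARC: two encoders, a causal relay
encoding function and a destination decoder. -/
structure MARCCode (S1 S2 W W3 X1 X2 X3 Y Y3 : Type) (m n : ℕ) where
  f1 : (Fin m → S1) → Fin n → X1
  f2 : (Fin m → S2) → Fin n → X2
  f3 : (k : Fin n) → (Fin k.val → Y3) → (Fin m → W3) → X3
  g : (Fin n → Y) → (Fin m → W) → (Fin m → S1) × (Fin m → S2)

variable {S1 S2 W W3 X1 X2 X3 Y Y3 : Type} {m n : ℕ}

/-- The relay channel input at time `k` (causal function of past relay outputs and `W3^m`). -/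
def relayIn (c : MARCCode S1 S2 W W3 X1 X2 X3 Y Y3 m n)
    (y3 : Fin n → Y3) (w3 : Fin m → W3) (k : Fin n) : X3 :=
  c.f3 k (fun j => y3 ⟨j.val, j.isLt.trans k.isLt⟩) w3

section
variable [Fintype S1] [Fintype S2] [Fintype W] [Fintype W3]
  [Fintype X1] [Fintype X2] [Fintype X3] [Fintype Y] [Fintype Y3]

/-- Joint law on (source sequences, destination outputs, relay outputs)
induced by the i.i.d. source, the encoders, the causal relay function and the
memoryless channel. -/
def marcLaw (src : SourcePMF (S1 × S2 × W × W3)) (ch : DMMARC X1 X2 X3 Y Y3)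
    (c : MARCCode S1 S2 W W3 X1 X2 X3 Y Y3 m n) :
    ((Fin m → S1 × S2 × W × W3) × (Fin n → Y) × (Fin n → Y3)) → ℝ :=
  fun ω => (∏ i, src.q (ω.1 i)) *
    ∏ k, ch.P (c.f1 (fun i => (ω.1 i).1) k) (c.f2 (fun i => (ω.1 i).2.1) k)
      (relayIn c ω.2.2 (fun i => (ω.1 i).2.2.2) k) (ω.2.1 k) (ω.2.2 k)

/-- Error probability of a MARC source-channel code. -/
def marcErr (src : SourcePMF (S1 × S2 × W × W3)) (ch : DMMARC X1 X2 X3 Y Y3)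
    (c : MARCCode S1 S2 W W3 X1 X2 X3 Y Y3 m n) : ℝ :=
  ∑ ω : (Fin m → S1 × S2 × W × W3) × (Fin n → Y) × (Fin n → Y3),
    if c.g ω.2.1 (fun i => (ω.1 i).2.2.1) ≠ (fun i => (ω.1 i).1, fun i => (ω.1 i).2.1)
    then marcLaw src ch c ω else 0

/-- Achievability of the source-channel rate `κ` for the DM MARC. -/
def marcAchievable (src : SourcePMF (S1 × S2 × W × W3)) (ch : DMMARC X1 X2 X3 Y Y3)
    (κ : ℝ) : Prop :=
  ∀ ε : ℝ, 0 < ε → ∃ m0 n0 : ℕ, ∀ m n : ℕ, m0 < m → n0 < n → (n : ℝ) / m = κ →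
    ∃ c : MARCCode S1 S2 W W3 X1 X2 X3 Y Y3 m n, marcErr src ch c < ε

end

section Entropy

variable {Ω α β γ δ τ : Type*} [Fintype Ω] {μ : Ω → ℝ}

lemma pr_nonneg (hμ : ∀ ω, 0 ≤ μ ω) (X : Ω → α) (a : α) : 0 ≤ pr μ X a :=
  sum_nonneg fun ω _ => by split_ifs <;> simp [hμ ω]

lemma pr_congr {X : Ω → α} {X' : Ω → β} {a : α} {a' : β} (h : ∀ ω, X ω = a ↔ X' ω = a') :
    pr μ X a = pr μ X' a' :=
  sum_congr rfl fun ω _ => if_congr (h ω) rfl rfl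

lemma pr_eq_zero {X : Ω → α} {a : α} (h : ∀ ω, X ω ≠ a) : pr μ X a = 0 :=
  sum_eq_zero fun ω _ => if_neg (h ω)

lemma pr_mono (hμ : ∀ ω, 0 ≤ μ ω) {X : Ω → α} {X' : Ω → β} {a : α} {a' : β}
    (h : ∀ ω, X ω = a → X' ω = a') : pr μ X a ≤ pr μ X' a' :=
  sum_le_sum fun ω _ => by
    by_cases hX : X ω = a
    · simp [hX, h ω hX]
    · split_ifs <;> simp [hμ ω]

lemma le_pr_self (hμ : ∀ ω, 0 ≤ μ ω) (X : Ω → α) (ω : Ω) : μ ω ≤ pr μ X (X ω) := by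
  have := single_le_sum (f := fun ω' => if X ω' = X ω then μ ω' else 0)
    (fun ω' _ => by split_ifs <;> simp [hμ ω']) (mem_univ ω)
  simpa [pr] using this

lemma sum_pr_mul [Fintype α] (X : Ω → α) (f : α → ℝ) :
    ∑ a, pr μ X a * f a = ∑ ω, μ ω * f (X ω) := by
  simp only [pr, sum_mul, ite_mul, zero_mul]
  rw [sum_comm]
  simp

lemma sum_pr_prod_left [Fintype α] (X : Ω → α) (Z : Ω → β) (b : β) :
    ∑ a, pr μ (fun ω => (X ω, Z ω)) (a, b) = pr μ Z b := by
  simp only [pr, Prod.mk.injEq]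
  rw [sum_comm]
  refine sum_congr rfl fun ω _ => ?_
  by_cases hZ : Z ω = b <;> simp [hZ]

lemma pr_prod_eq_mul_of_factor [Fintype δ] {Y : Ω → α} {D : Ω → δ} {T : Ω → τ} {r : α → τ → ℝ}
    (hdet : ∀ ω ω', D ω = D ω' → T ω = T ω')
    (hfac : ∀ ω y, pr μ (fun ω' => (Y ω', D ω')) (y, D ω) = r y (T ω) * pr μ D (D ω))
    (y : α) (t : τ) : pr μ (fun ω => (Y ω, T ω)) (y, t) = r y t * pr μ T t := by
  have hfiber : ∀ d, pr μ (fun ω => (D ω, Y ω, T ω)) (d, y, t)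
      = r y t * pr μ (fun ω => (D ω, T ω)) (d, t) := by
    intro d
    by_cases hex : ∃ ω₁, D ω₁ = d ∧ T ω₁ = t
    · obtain ⟨ω₁, rfl, rfl⟩ := hex
      have hYT : pr μ (fun ω => (D ω, Y ω, T ω)) (D ω₁, y, T ω₁)
          = pr μ (fun ω => (Y ω, D ω)) (y, D ω₁) := pr_congr fun ω => by
        simp only [Prod.mk.injEq]
        exact ⟨fun h => ⟨h.2.1, h.1⟩, fun h => ⟨h.2, h.1, hdet ω ω₁ h.2⟩⟩
      have hT : pr μ (fun ω => (D ω, T ω)) (D ω₁, T ω₁) = pr μ D (D ω₁) := pr_congr fun ω =>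
        ⟨fun h => (Prod.ext_iff.1 h).1, fun h => Prod.ext h (hdet ω ω₁ h)⟩
      rw [hYT, hT, hfac]
    · push Not at hex
      rw [pr_eq_zero, pr_eq_zero, mul_zero] <;> intro ω h <;>
        simp only [Prod.mk.injEq] at h <;> exact hex ω h.1 (by simp [h])
  rw [← sum_pr_prod_left D, ← sum_pr_prod_left D, mul_sum]
  exact sum_congr rfl fun d _ => hfiber d

lemma Hent_eq_sum [Fintype α] (X : Ω → α) :
    Hent μ X = -∑ ω, μ ω * Real.logb 2 (pr μ X (X ω)) := by
  rw [Hent, sum_pr_mul]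

lemma Hent_congr [Fintype α] [Fintype β] {X : Ω → α} {X' : Ω → β}
    (h : ∀ ω ω', X ω = X ω' ↔ X' ω = X' ω') : Hent μ X = Hent μ X' := by
  simp only [Hent_eq_sum, pr_congr fun ω' => h ω' _]

lemma condEnt_congr_right [Fintype α] [Fintype β] [Fintype γ] (X : Ω → α) {U : Ω → β}
    {V : Ω → γ} (h : ∀ ω ω', U ω = U ω' ↔ V ω = V ω') : condEnt μ X U = condEnt μ X V := by
  have hXU : ∀ ω ω', (X ω, U ω) = (X ω', U ω') ↔ (X ω, V ω) = (X ω', V ω') := by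
    simp only [Prod.mk.injEq, h, implies_true]
  rw [condEnt, condEnt, Hent_congr h, Hent_congr hXU]

end Entropy

section Submodularity

variable {Ω α β γ : Type*} [Fintype Ω] {μ : Ω → ℝ}

lemma sum_mul_log_div_nonneg {ι : Type*} [Fintype ι] {p q : ι → ℝ} (hp : ∀ i, 0 ≤ p i)
    (hq : ∀ i, 0 ≤ q i) (hpq : ∀ i, 0 < p i → 0 < q i) (hsum : ∑ i, q i ≤ ∑ i, p i) :
    0 ≤ ∑ i, p i * Real.log (p i / q i) := by
  have hterm : ∀ i, p i - q i ≤ p i * Real.log (p i / q i) := by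
    intro i
    rcases (hp i).eq_or_lt with h | h
    · simp [← h, hq i]
    · have hlog := Real.one_sub_inv_le_log_of_pos (div_pos h (hpq i h))
      rw [inv_div] at hlog
      calc p i - q i = p i * (1 - q i / p i) := by field_simp
        _ ≤ _ := mul_le_mul_of_nonneg_left hlog h.le
  calc 0 ≤ ∑ i, (p i - q i) := by rw [sum_sub_distrib]; linarith
    _ ≤ _ := sum_le_sum fun i _ => hterm i

/-- The law of `(A, B, C)` making `A` and `B` conditionally independent given `C`; it is `0`
where `C` has mass zero. -/
def condIndepLaw (μ : Ω → ℝ) (A : Ω → α) (B : Ω → β) (C : Ω → γ) (v : α × β × γ) : ℝ :=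
  pr μ (fun ω => (A ω, C ω)) (v.1, v.2.2) * pr μ (fun ω => (B ω, C ω)) (v.2.1, v.2.2)
    / pr μ C v.2.2

lemma condIndepLaw_nonneg (hμ : ∀ ω, 0 ≤ μ ω) (A : Ω → α) (B : Ω → β) (C : Ω → γ)
    (v : α × β × γ) : 0 ≤ condIndepLaw μ A B C v :=
  div_nonneg (mul_nonneg (pr_nonneg hμ _ _) (pr_nonneg hμ _ _)) (pr_nonneg hμ _ _)

lemma condIndepLaw_pos (hμ : ∀ ω, 0 ≤ μ ω) {A : Ω → α} {B : Ω → β} {C : Ω → γ}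
    {v : α × β × γ} (hv : 0 < pr μ (fun ω => (A ω, B ω, C ω)) v) :
    0 < condIndepLaw μ A B C v := by
  have hAC := hv.trans_le
    (pr_mono hμ (X' := fun ω => (A ω, C ω)) (a' := (v.1, v.2.2)) fun ω h => by simp [← h])
  have hBC := hv.trans_le
    (pr_mono hμ (X' := fun ω => (B ω, C ω)) (a' := (v.2.1, v.2.2)) fun ω h => by simp [← h])
  have hC := hv.trans_le (pr_mono hμ (X' := C) (a' := v.2.2) fun ω h => by simp [← h])
  unfold condIndepLaw
  positivity

lemma sum_condIndepLaw [Fintype α] [Fintype β] [Fintype γ] (A : Ω → α) (B : Ω → β)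
    (C : Ω → γ) : ∑ v, condIndepLaw μ A B C v = ∑ v, pr μ (fun ω => (A ω, B ω, C ω)) v :=
  calc ∑ v, condIndepLaw μ A B C v
      = ∑ c, (∑ a, pr μ (fun ω => (A ω, C ω)) (a, c))
          * (∑ b, pr μ (fun ω => (B ω, C ω)) (b, c)) / pr μ C c := by
        simp only [condIndepLaw, Fintype.sum_prod_type, sum_mul, mul_sum, sum_div]
        rw [sum_comm]
        conv_rhs => rw [sum_comm]
        exact sum_congr rfl fun b _ => sum_comm
    _ = ∑ c, pr μ C c := by
        simp only [sum_pr_prod_left]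
        exact sum_congr rfl fun c _ => mul_self_div_self _
    _ = _ := by
        rw [Fintype.sum_prod_type, sum_comm]
        simp only [sum_pr_prod_left A (fun ω => (B ω, C ω))]
        rw [Fintype.sum_prod_type, sum_comm]
        simp only [sum_pr_prod_left]

lemma Hent_submodular (hμ : ∀ ω, 0 ≤ μ ω) [Fintype α] [Fintype β] [Fintype γ]
    (A : Ω → α) (B : Ω → β) (C : Ω → γ) :
    Hent μ (fun ω => (A ω, B ω, C ω)) + Hent μ C
      ≤ Hent μ (fun ω => (A ω, C ω)) + Hent μ (fun ω => (B ω, C ω)) := by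
  set V : Ω → α × β × γ := fun ω => (A ω, B ω, C ω)
  have hpoint : ∀ ω, μ ω * Real.logb 2 (pr μ V (V ω) / condIndepLaw μ A B C (V ω))
      = μ ω * Real.logb 2 (pr μ V (V ω)) + μ ω * Real.logb 2 (pr μ C (C ω))
        - μ ω * Real.logb 2 (pr μ (fun ω => (A ω, C ω)) (A ω, C ω))
        - μ ω * Real.logb 2 (pr μ (fun ω => (B ω, C ω)) (B ω, C ω)) := by
    intro ω
    rcases (hμ ω).eq_or_lt with h | h
    · simp [← h]
    have hV := h.trans_le (le_pr_self hμ V ω)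
    have hAC := h.trans_le (le_pr_self hμ (fun ω => (A ω, C ω)) ω)
    have hBC := h.trans_le (le_pr_self hμ (fun ω => (B ω, C ω)) ω)
    have hC := h.trans_le (le_pr_self hμ C ω)
    rw [condIndepLaw, Real.logb_div hV.ne' (by positivity), Real.logb_div (by positivity) hC.ne',
      Real.logb_mul hAC.ne' hBC.ne']
    ring
  have hgap : Hent μ (fun ω => (A ω, C ω)) + Hent μ (fun ω => (B ω, C ω))
      - (Hent μ V + Hent μ C)
      = (∑ v, pr μ V v * Real.log (pr μ V v / condIndepLaw μ A B C v)) / Real.log 2 := by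
    simp only [sum_div, mul_div_assoc, Real.log_div_log]
    rw [sum_pr_mul V fun v => Real.logb 2 (pr μ V v / condIndepLaw μ A B C v)]
    simp only [hpoint, sum_add_distrib, sum_sub_distrib, Hent_eq_sum]
    ring
  have hgibbs := sum_mul_log_div_nonneg (pr_nonneg hμ V) (condIndepLaw_nonneg hμ A B C)
    (fun v => condIndepLaw_pos hμ) (sum_condIndepLaw A B C).le
  linarith [div_nonneg hgibbs (Real.log_pos one_lt_two).le]

end Submodularity

section Information

variable {Ω α β γ δ τ : Type*} [Fintype Ω] {μ : Ω → ℝ}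
  [Fintype α] [Fintype β] [Fintype γ] [Fintype δ] [Fintype τ]

lemma condEnt_le_of_determines (hμ : ∀ ω, 0 ≤ μ ω) (X : Ω → α) {U : Ω → β} {V : Ω → γ}
    (h : ∀ ω ω', V ω = V ω' → U ω = U ω') : condEnt μ X V ≤ condEnt μ X U := by
  have hXV : Hent μ (fun ω => (X ω, V ω, U ω)) = Hent μ (fun ω => (X ω, V ω)) :=
    Hent_congr fun ω ω' => by
      simp only [Prod.mk.injEq]
      exact ⟨fun h' => ⟨h'.1, h'.2.1⟩, fun h' => ⟨h'.1, h'.2, h ω ω' h'.2⟩⟩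
  have hV : Hent μ (fun ω => (V ω, U ω)) = Hent μ V :=
    Hent_congr fun ω ω' => by
      simp only [Prod.mk.injEq]
      exact ⟨And.left, fun h' => ⟨h', h ω ω' h'⟩⟩
  have := Hent_submodular hμ X V U
  rw [hXV, hV] at this
  unfold condEnt
  linarith

lemma condMutInfo_comm (X : Ω → α) (Y : Ω → β) (Z : Ω → γ) :
    condMutInfo μ X Y Z = condMutInfo μ Y X Z := by
  have h : Hent μ (fun ω => (X ω, Y ω, Z ω)) = Hent μ (fun ω => (Y ω, X ω, Z ω)) :=
    Hent_congr fun ω ω' => by simp only [Prod.mk.injEq]; tauto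
  simp only [condMutInfo, condEnt, h]
  ring

lemma condMutInfo_le_of_determines (hμ : ∀ ω, 0 ≤ μ ω) {X : Ω → α} {X' : Ω → β} (Y : Ω → γ)
    (Z : Ω → δ) (h : ∀ ω ω', X' ω = X' ω' → X ω = X ω') :
    condMutInfo μ X Y Z ≤ condMutInfo μ X' Y Z := by
  rw [condMutInfo_comm, condMutInfo_comm X']
  exact sub_le_sub_left (condEnt_le_of_determines hμ Y fun ω ω' hω => by
    simp only [Prod.mk.injEq] at hω ⊢
    exact ⟨h ω ω' hω.1, hω.2⟩) _

lemma condEnt_eq_of_pr_eq_mul (hμ : ∀ ω, 0 ≤ μ ω) (Y : Ω → α) (D : Ω → δ) (ρ : Ω → ℝ)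
    (h : ∀ ω, pr μ (fun ω' => (Y ω', D ω')) (Y ω, D ω) = ρ ω * pr μ D (D ω)) :
    condEnt μ Y D = -∑ ω, μ ω * Real.logb 2 (ρ ω) := by
  rw [condEnt, Hent_eq_sum, Hent_eq_sum, neg_sub_neg, ← sum_sub_distrib, ← sum_neg_distrib]
  refine sum_congr rfl fun ω _ => ?_
  rcases (hμ ω).eq_or_lt with hω | hω
  · simp [← hω]
  have hD := hω.trans_le (le_pr_self hμ D ω)
  have hYD := hω.trans_le (le_pr_self hμ (fun ω' => (Y ω', D ω')) ω)
  rw [h] at hYD ⊢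
  rw [Real.logb_mul (pos_of_mul_pos_left hYD hD.le).ne' hD.ne']
  ring

/-- `hfac` says that `D → T → Y` is a Markov chain. -/
lemma condEnt_eq_of_markov (hμ : ∀ ω, 0 ≤ μ ω) {Y : Ω → α} {D : Ω → δ} {T : Ω → τ}
    (r : α → τ → ℝ) (hdet : ∀ ω ω', D ω = D ω' → T ω = T ω')
    (hfac : ∀ ω y, pr μ (fun ω' => (Y ω', D ω')) (y, D ω) = r y (T ω) * pr μ D (D ω)) :
    condEnt μ Y D = condEnt μ Y T := by
  rw [condEnt_eq_of_pr_eq_mul hμ Y D _ fun ω => hfac ω (Y ω),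
    condEnt_eq_of_pr_eq_mul hμ Y T _ fun ω => pr_prod_eq_mul_of_factor hdet hfac _ _]

lemma condMutInfo_le_of_markov (hμ : ∀ ω, 0 ≤ μ ω) {X : Ω → α} (Y : Ω → β) {Z : Ω → γ}
    {U : Ω → δ} {V : Ω → τ} {ι : Type*} [Fintype ι] {D : Ω → ι}
    (hZ : ∀ ω ω', Z ω = Z ω' → V ω = V ω')
    (hD : ∀ ω ω', D ω = D ω' → (X ω, Z ω) = (X ω', Z ω'))
    (hY : condEnt μ Y D = condEnt μ Y fun ω => (U ω, V ω)) :
    condMutInfo μ X Y Z ≤ condMutInfo μ U Y V := by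
  rw [condMutInfo_comm, condMutInfo_comm U]
  have h₁ := condEnt_le_of_determines hμ Y hZ
  have h₂ := condEnt_le_of_determines hμ Y hD
  unfold condMutInfo
  linarith

end Information

section ChainRule

variable {Ω α β γ : Type*}

/-- The prefix `y^t` of a sequence, as a value in a type that does not depend on `t`. -/
def seqPrefix (t : ℕ) (y : Fin n → β) : Fin n → Option β :=
  fun j => if (j : ℕ) < t then some (y j) else none

lemma seqPrefix_eq_iff {t : ℕ} {y y' : Fin n → β} :
    seqPrefix t y = seqPrefix t y' ↔ ∀ j : Fin n, (j : ℕ) < t → y j = y' j := by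
  simp only [seqPrefix, funext_iff]
  refine forall_congr' fun j => ?_
  by_cases hj : (j : ℕ) < t <;> simp [hj]

lemma seqPrefix_zero (y y' : Fin n → β) : seqPrefix 0 y = seqPrefix 0 y' := by
  simp [seqPrefix_eq_iff]

lemma seqPrefix_length_eq_iff {y y' : Fin n → β} : seqPrefix n y = seqPrefix n y' ↔ y = y' := by
  rw [seqPrefix_eq_iff, funext_iff]
  exact forall_congr' fun j => ⟨fun h => h j.isLt, fun h _ => h⟩

lemma seqPrefix_succ_eq_iff (i : Fin n) {y y' : Fin n → β} :
    seqPrefix (i + 1) y = seqPrefix (i + 1) y' ↔ y i = y' i ∧ seqPrefix i y = seqPrefix i y' := by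
  simp only [seqPrefix_eq_iff]
  refine ⟨fun h => ⟨h i i.val.lt_succ_self, fun j hj => h j (by omega)⟩, fun h j hj => ?_⟩
  rcases (Nat.lt_succ_iff_lt_or_eq.1 hj) with hj | hj
  · exact h.2 j hj
  · rw [Fin.ext hj]; exact h.1

lemma seqPrefix_map_eq {δ : Type*} {t : ℕ} {y y' : Fin n → β} (f : β → δ)
    (h : seqPrefix t y = seqPrefix t y') :
    seqPrefix t (fun j => f (y j)) = seqPrefix t (fun j => f (y' j)) :=
  seqPrefix_eq_iff.2 fun j hj => by rw [seqPrefix_eq_iff.1 h j hj]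

lemma seqPrefix_update_of_le {t : ℕ} {i : Fin n} (h : t ≤ i) (z : Fin n → β) (c : β) :
    seqPrefix t (Function.update z i c) = seqPrefix t z :=
  seqPrefix_eq_iff.2 fun j hj => Function.update_of_ne (by rintro rfl; omega) _ _

variable [Fintype Ω] {μ : Ω → ℝ} [Fintype α] [Fintype β] [Fintype γ]

lemma condMutInfo_eq_sum_prefix (X : Ω → α) (Y : Ω → Fin n → β) (Z : Ω → γ) :
    condMutInfo μ X Y Z
      = ∑ i : Fin n, condMutInfo μ X (fun ω => Y ω i) (fun ω => (seqPrefix i (Y ω), Z ω)) := by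
  set F : ℕ → ℝ := fun t => condEnt μ X fun ω => (seqPrefix t (Y ω), Z ω)
  have hF₀ : condEnt μ X Z = F 0 := condEnt_congr_right X fun ω ω' => by
    simp [seqPrefix_zero (Y ω) (Y ω')]
  have hFₙ : condEnt μ X (fun ω => (Y ω, Z ω)) = F n :=
    condEnt_congr_right X fun ω ω' => by simp [seqPrefix_length_eq_iff]
  have hstep : ∀ i : Fin n, condMutInfo μ X (fun ω => Y ω i)
      (fun ω => (seqPrefix i (Y ω), Z ω)) = F i - F (i + 1) := fun i =>
    congrArg _ <| condEnt_congr_right X fun ω ω' => by simp [seqPrefix_succ_eq_iff, and_assoc]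
  rw [condMutInfo, hF₀, hFₙ, ← sum_range_sub', ← Fin.sum_univ_eq_sum_range]
  simp only [hstep]

end ChainRule

section CausalProduct

variable {γ : Type*} {κ : Fin n → (Fin n → γ) → γ → ℝ}

def IsCausalKernel (κ : Fin n → (Fin n → γ) → γ → ℝ) : Prop :=
  ∀ (k : Fin n) z z', seqPrefix k z = seqPrefix k z' → κ k z = κ k z'

lemma prod_lt_succ_update (hκ : IsCausalKernel κ) (i : Fin n) (z₀ : Fin n → γ) (c : γ) :
    ∏ k : Fin n with k.val < i.val + 1, κ k (Function.update z₀ i c) (Function.update z₀ i c k)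
      = (∏ k : Fin n with k.val < i.val, κ k z₀ (z₀ k)) * κ i z₀ c := by
  have hfilter : univ.filter (fun k : Fin n => k.val < i.val + 1)
      = insert i (univ.filter fun k : Fin n => k.val < i.val) := by
    ext k
    simp only [mem_filter, mem_univ, true_and, mem_insert, Fin.ext_iff]
    omega
  rw [hfilter, prod_insert (by simp), mul_comm, Function.update_self,
    hκ i _ _ (seqPrefix_update_of_le le_rfl z₀ c)]
  congr 1
  refine prod_congr rfl fun k hk => ?_
  have hk : (k : ℕ) < i := (mem_filter.1 hk).2
  rw [Function.update_of_ne (by rintro rfl; omega),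
    hκ k _ _ (seqPrefix_update_of_le hk.le z₀ c)]

variable [Fintype γ]

lemma sum_seqPrefix_eq_sum_sum_update (i : Fin n) (z₀ : Fin n → γ) (F : (Fin n → γ) → ℝ) :
    ∑ z with seqPrefix i z = seqPrefix i z₀, F z
      = ∑ c, ∑ z with seqPrefix (i + 1) z = seqPrefix (i + 1) (Function.update z₀ i c), F z := by
  rw [← sum_fiberwise _ fun z => z i]
  refine sum_congr rfl fun c _ => ?_
  rw [filter_filter]
  refine sum_congr (filter_congr fun z _ => ?_) fun _ _ => rfl
  rw [seqPrefix_succ_eq_iff, Function.update_self, seqPrefix_update_of_le le_rfl, and_comm]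

lemma sum_mul_prod_causal_of_succ (hκ : IsCausalKernel κ) (i : Fin n)
    (hsucc : ∀ z₀, ∑ z with seqPrefix (i + 1) z = seqPrefix (i + 1) z₀, ∏ k, κ k z (z k)
      = ∏ k : Fin n with k.val < i.val + 1, κ k z₀ (z₀ k))
    (z₀ : Fin n → γ) (φ : γ → ℝ) :
    ∑ z with seqPrefix i z = seqPrefix i z₀, φ (z i) * ∏ k, κ k z (z k)
      = (∏ k : Fin n with k.val < i.val, κ k z₀ (z₀ k)) * ∑ c, φ c * κ i z₀ c := by
  rw [sum_seqPrefix_eq_sum_sum_update i z₀, mul_sum]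
  refine sum_congr rfl fun c _ => ?_
  have hzi : ∀ z ∈ ({z | seqPrefix (i + 1) z = seqPrefix (i + 1) (Function.update z₀ i c)} :
      Finset (Fin n → γ)), z i = c := fun z hz => by
    simpa using ((seqPrefix_succ_eq_iff i).1 (mem_filter.1 hz).2).1
  rw [sum_congr rfl fun z hz => by rw [hzi z hz], ← mul_sum, hsucc, prod_lt_succ_update hκ]
  ring

lemma sum_prod_causal (hκ : IsCausalKernel κ) (hκ₁ : ∀ (k : Fin n) z, ∑ c, κ k z c = 1)
    {t : ℕ} (ht : t ≤ n) (z₀ : Fin n → γ) :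
    ∑ z with seqPrefix t z = seqPrefix t z₀, ∏ k, κ k z (z k)
      = ∏ k : Fin n with k.val < t, κ k z₀ (z₀ k) := by
  induction ht using Nat.decreasingInduction generalizing z₀ with
  | self =>
    simp [seqPrefix_length_eq_iff, filter_eq']
  | of_succ t ht ih =>
    obtain ⟨i, rfl⟩ : ∃ i : Fin n, (i : ℕ) = t := ⟨⟨t, ht⟩, rfl⟩
    simpa [hκ₁] using sum_mul_prod_causal_of_succ hκ i ih z₀ fun _ => 1

lemma sum_mul_prod_causal (hκ : IsCausalKernel κ) (hκ₁ : ∀ (k : Fin n) z, ∑ c, κ k z c = 1)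
    (i : Fin n) (z₀ : Fin n → γ) (φ : γ → ℝ) :
    ∑ z with seqPrefix i z = seqPrefix i z₀, φ (z i) * ∏ k, κ k z (z k)
      = (∏ k : Fin n with k.val < i.val, κ k z₀ (z₀ k)) * ∑ c, φ c * κ i z₀ c :=
  sum_mul_prod_causal_of_succ hκ i (sum_prod_causal hκ hκ₁ i.isLt) z₀ φ

end CausalProduct

section MARC

lemma relayIn_eq_of_seqPrefix_eq (c : MARCCode S1 S2 W W3 X1 X2 X3 Y Y3 m n)
    {y3 y3' : Fin n → Y3} (w3 : Fin m → W3) (k : Fin n) (h : seqPrefix k y3 = seqPrefix k y3') :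
    relayIn c y3 w3 k = relayIn c y3' w3 k := by
  unfold relayIn
  congr 1
  funext j
  exact seqPrefix_eq_iff.1 h _ j.isLt

variable [Fintype X1] [Fintype X2] [Fintype X3] [Fintype Y] [Fintype Y3]

/-- The time-`k` channel factor of `marcLaw`, as a kernel on the sequence `z` of
(destination, relay) output pairs. -/
def marcKernel (ch : DMMARC X1 X2 X3 Y Y3) (c : MARCCode S1 S2 W W3 X1 X2 X3 Y Y3 m n)
    (σ : Fin m → S1 × S2 × W × W3) (k : Fin n) (z : Fin n → Y × Y3) (v : Y × Y3) : ℝ :=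
  ch.P (c.f1 (fun j => (σ j).1) k) (c.f2 (fun j => (σ j).2.1) k)
    (relayIn c (fun j => (z j).2) (fun j => (σ j).2.2.2) k) v.1 v.2

lemma marcKernel_eq_of_seqPrefix_eq (ch : DMMARC X1 X2 X3 Y Y3)
    (c : MARCCode S1 S2 W W3 X1 X2 X3 Y Y3 m n) (σ : Fin m → S1 × S2 × W × W3) (k : Fin n)
    {z z' : Fin n → Y × Y3} (h : seqPrefix k z = seqPrefix k z') :
    marcKernel ch c σ k z = marcKernel ch c σ k z' := by
  unfold marcKernel
  rw [relayIn_eq_of_seqPrefix_eq c _ k (seqPrefix_map_eq Prod.snd h)]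

lemma sum_marcKernel (ch : DMMARC X1 X2 X3 Y Y3) (c : MARCCode S1 S2 W W3 X1 X2 X3 Y Y3 m n)
    (σ : Fin m → S1 × S2 × W × W3) (k : Fin n) (z : Fin n → Y × Y3) :
    ∑ v, marcKernel ch c σ k z v = 1 := by
  rw [Fintype.sum_prod_type]
  exact ch.sum_one _ _ _

variable [Fintype S1] [Fintype S2] [Fintype W] [Fintype W3] (src : SourcePMF (S1 × S2 × W × W3))
  (ch : DMMARC X1 X2 X3 Y Y3) (c : MARCCode S1 S2 W W3 X1 X2 X3 Y Y3 m n)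

lemma marcLaw_nonneg (ω : (Fin m → S1 × S2 × W × W3) × (Fin n → Y) × (Fin n → Y3)) :
    0 ≤ marcLaw src ch c ω :=
  mul_nonneg (prod_nonneg fun _ _ => src.nonneg _) (prod_nonneg fun _ _ => ch.nonneg _ _ _ _ _)

lemma marcLaw_mk (σ : Fin m → S1 × S2 × W × W3) (z : Fin n → Y × Y3) :
    marcLaw src ch c (σ, fun k => (z k).1, fun k => (z k).2)
      = (∏ j, src.q (σ j)) * ∏ k, marcKernel ch c σ k z (z k) := rfl

lemma sum_marcLaw_prefix (i : Fin n) (σ₀ : Fin m → S1 × S2 × W × W3) (z₀ : Fin n → Y × Y3)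
    (φ : Y × Y3 → ℝ) :
    ∑ ω : (Fin m → S1 × S2 × W × W3) × (Fin n → Y) × (Fin n → Y3),
      (if (ω.1, seqPrefix i fun k => (ω.2.1 k, ω.2.2 k)) = (σ₀, seqPrefix i z₀)
        then φ (ω.2.1 i, ω.2.2 i) * marcLaw src ch c ω else 0)
      = (∏ j, src.q (σ₀ j)) * (∏ k : Fin n with k.val < i.val, marcKernel ch c σ₀ k z₀ (z₀ k))
        * ∑ v, φ v * marcKernel ch c σ₀ i z₀ v := by
  rw [Fintype.sum_prod_type, Fintype.sum_eq_single σ₀ fun σ hσ => ?_]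
  swap
  · exact sum_eq_zero fun _ _ => if_neg fun h => hσ (Prod.ext_iff.1 h).1
  rw [← (Equiv.arrowProdEquivProdArrow (Fin n) (fun _ => Y) (fun _ => Y3)).sum_comp]
  simp only [Equiv.arrowProdEquivProdArrow, Equiv.coe_fn_mk, marcLaw_mk, Prod.mk.eta,
    Prod.mk.injEq, true_and]
  rw [← sum_filter, mul_assoc, ← sum_mul_prod_causal (marcKernel_eq_of_seqPrefix_eq ch c σ₀)
    (sum_marcKernel ch c σ₀), mul_sum]
  refine sum_congr ?_ fun z _ => by ring
  ext z
  simp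

lemma marc_condEnt_output_past_eq_inputs (i : Fin n) :
    condEnt (marcLaw src ch c) (fun ω => ω.2.1 i)
      (fun ω => (ω.1, seqPrefix i fun k => (ω.2.1 k, ω.2.2 k)))
    = condEnt (marcLaw src ch c) (fun ω => ω.2.1 i)
      (fun ω => ((c.f1 (fun j => (ω.1 j).1) i, relayIn c ω.2.2 (fun j => (ω.1 j).2.2.2) i),
        c.f2 (fun j => (ω.1 j).2.1) i)) := by
  refine condEnt_eq_of_markov (marcLaw_nonneg src ch c)
    (fun y t => ∑ b, ch.P t.1.1 t.2 t.1.2 y b) (fun ω ω' h => ?_) fun ω₀ y => ?_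
  · obtain ⟨hσ, hpre⟩ := Prod.ext_iff.1 h
    simp only at hσ hpre
    rw [hσ, relayIn_eq_of_seqPrefix_eq c _ i (seqPrefix_map_eq Prod.snd hpre)]
  · have hD : pr (marcLaw src ch c) (fun ω => (ω.1, seqPrefix i fun k => (ω.2.1 k, ω.2.2 k)))
        (ω₀.1, seqPrefix i fun k => (ω₀.2.1 k, ω₀.2.2 k))
        = (∏ j, src.q (ω₀.1 j)) * ∏ k : Fin n with k.val < i.val,
          marcKernel ch c ω₀.1 k (fun k => (ω₀.2.1 k, ω₀.2.2 k)) (ω₀.2.1 k, ω₀.2.2 k) := by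
      simpa [pr, sum_marcKernel] using
        sum_marcLaw_prefix src ch c i ω₀.1 (fun k => (ω₀.2.1 k, ω₀.2.2 k)) fun _ => 1
    have hYD := sum_marcLaw_prefix src ch c i ω₀.1 (fun k => (ω₀.2.1 k, ω₀.2.2 k))
      fun v => if v.1 = y then 1 else 0
    have hpr : pr (marcLaw src ch c)
        (fun ω => (ω.2.1 i, ω.1, seqPrefix i fun k => (ω.2.1 k, ω.2.2 k)))
        (y, ω₀.1, seqPrefix i fun k => (ω₀.2.1 k, ω₀.2.2 k))
        = ∑ ω, if (ω.1, seqPrefix i fun k => (ω.2.1 k, ω.2.2 k))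
            = (ω₀.1, seqPrefix i fun k => (ω₀.2.1 k, ω₀.2.2 k))
          then (if (ω.2.1 i, ω.2.2 i).1 = y then 1 else 0) * marcLaw src ch c ω else 0 :=
      sum_congr rfl fun ω _ => by
        simp only [Prod.mk.injEq]
        split_ifs <;> simp_all
    rw [hpr, hYD, hD]
    simp [Fintype.sum_prod_type, marcKernel]
    ring

lemma marc_condMutInfo_letter_le (i : Fin n) :
    condMutInfo (marcLaw src ch c)
      (fun ω => (fun j => (ω.1 j).1, fun j => (ω.1 j).2.2.2)) (fun ω => ω.2.1 i)
      (fun ω => (seqPrefix i ω.2.1, fun j => (ω.1 j).2.1, fun j => (ω.1 j).2.2.1))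
    ≤ condMutInfo (marcLaw src ch c)
      (fun ω => (c.f1 (fun j => (ω.1 j).1) i, relayIn c ω.2.2 (fun j => (ω.1 j).2.2.2) i))
      (fun ω => ω.2.1 i) (fun ω => c.f2 (fun j => (ω.1 j).2.1) i) := by
  refine condMutInfo_le_of_markov (marcLaw_nonneg src ch c) _ (fun ω ω' h => ?_)
    (fun ω ω' h => ?_) (marc_condEnt_output_past_eq_inputs src ch c i)
  · simp only [Prod.mk.injEq] at h
    rw [h.2.1]
  · obtain ⟨hσ, hpre⟩ := Prod.ext_iff.1 h
    simp only at hσ hpre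
    rw [hσ, seqPrefix_map_eq Prod.fst hpre]

end MARC

section ChainIneq

variable {S1 S2 W W3 X1 X2 X3 Y Y3 : Type}
  [Fintype S1] [Fintype S2] [Fintype W] [Fintype W3]
  [Fintype X1] [Fintype X2] [Fintype X3] [Fintype Y] [Fintype Y3]

/-- Converse chain inequality for the individual destination bound
(key step in the proof of Proposition 1):
`∑_{i=1}^{n} I(X_{1,i},X_{3,i};Y_i|X_{2,i}) ≥ I(S1^m,W3^m;Y^n|S2^m,W^m)
  ≥ H(S1^m|S2^m,W^m) − H(S1^m|Y^n,S2^m,W^m)`. -/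
theorem marc_converse_chain_individual {m n : ℕ}
    (src : SourcePMF (S1 × S2 × W × W3)) (ch : DMMARC X1 X2 X3 Y Y3)
    (c : MARCCode S1 S2 W W3 X1 X2 X3 Y Y3 m n) :
    (∑ i : Fin n, condMutInfo (marcLaw src ch c)
        (fun ω => (c.f1 (fun j => (ω.1 j).1) i, relayIn c ω.2.2 (fun j => (ω.1 j).2.2.2) i))
        (fun ω => ω.2.1 i)
        (fun ω => c.f2 (fun j => (ω.1 j).2.1) i)
      ≥ condMutInfo (marcLaw src ch c)
        (fun ω => (fun j => (ω.1 j).1, fun j => (ω.1 j).2.2.2))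
        (fun ω => ω.2.1)
        (fun ω => (fun j => (ω.1 j).2.1, fun j => (ω.1 j).2.2.1)))
    ∧ (condMutInfo (marcLaw src ch c)
        (fun ω => (fun j => (ω.1 j).1, fun j => (ω.1 j).2.2.2))
        (fun ω => ω.2.1)
        (fun ω => (fun j => (ω.1 j).2.1, fun j => (ω.1 j).2.2.1))
      ≥ condEnt (marcLaw src ch c) (fun ω => fun j => (ω.1 j).1)
          (fun ω => (fun j => (ω.1 j).2.1, fun j => (ω.1 j).2.2.1))
        - condEnt (marcLaw src ch c) (fun ω => fun j => (ω.1 j).1)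
          (fun ω => (ω.2.1, fun j => (ω.1 j).2.1, fun j => (ω.1 j).2.2.1))) := by
  have hμ := marcLaw_nonneg src ch c
  refine ⟨?_, condMutInfo_le_of_determines hμ _ _ fun ω ω' h => congrArg Prod.fst h⟩
  rw [ge_iff_le, condMutInfo_eq_sum_prefix]
  exact sum_le_sum fun i _ => marc_condMutInfo_letter_le src ch c i

end ChainIneq

end Paper
end
end
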